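/- The size of r_n is at least 2^n, where r_0 = λz.z and r_{n+1} = λy.(y r_n r_n), while the size of u_n I is linear in n. -/
import Mathlib

/-- Lambda terms with named variables. -/
inductive Term : Type
  | var : ℕ → Term
  | lam : ℕ → Term → Term
  | app : Term → Term → Term
deriving DecidableEq

namespace Term

/-- Size: the number of constructors. -/
def size : Term → ℕ
  | var _ => 1
  | lam _ t => t.size + 1
  | app t s => t.size + s.size + 1

/-- Substitution (stopping at matching binders). -/
def subst (x : ℕ) (u : Term) : Term → Term
  | var y => if y = x then u else var y
  | lam y t => if y = x then lam y t else lam y (subst x u t)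
  | app t s => app (subst x u t) (subst x u s)

end Term

/-- Beta reduction: compatible closure of the root beta rule. -/
inductive Beta : Term → Term → Prop
  | beta (x : ℕ) (t u : Term) : Beta (.app (.lam x t) u) (Term.subst x u t)
  | appL {t t' : Term} (u : Term) : Beta t t' → Beta (.app t u) (.app t' u)
  | appR {u u' : Term} (t : Term) : Beta u u' → Beta (.app t u) (.app t u')
  | lam {t t' : Term} (x : ℕ) : Beta t t' → Beta (.lam x t) (.lam x t')

/-- Weak head reduction. -/
inductive Wh : Term → Term → Prop
  | beta (x : ℕ) (t u : Term) : Wh (.app (.lam x t) u) (Term.subst x u t)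
  | appL {t t' : Term} (u : Term) : Wh t t' → Wh (.app t u) (.app t' u)

/-- `StepN R n a b`: `a` reduces to `b` in exactly `n` `R`-steps. -/
inductive StepN {α : Type} (R : α → α → Prop) : ℕ → α → α → Prop
  | refl (a : α) : StepN R 0 a a
  | step {a b c : α} {n : ℕ} : R a b → StepN R n b c → StepN R (n + 1) a c

/-- `λy.(y x x)` with `x` the variable 0 and `y` the variable 1. -/
def lamyxx : Term := .lam 1 (.app (.app (.var 1) (.var 0)) (.var 0))

/-- `u_1 = λx.λy.(y x x)`, `u_{n+1} = λx.(u_n (λy.(y x x)))` (value at 0 is irrelevant). -/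
def uFam : ℕ → Term
  | 0 => .var 0
  | 1 => .lam 0 lamyxx
  | n + 2 => .lam 0 (.app (uFam (n + 1)) lamyxx)

/-- `r_0 = I = λz.z`, `r_{n+1} = λy.(y r_n r_n)`. -/
def rFam : ℕ → Term
  | 0 => .lam 2 (.var 2)
  | n + 1 => .lam 1 (.app (.app (.var 1) (rFam n)) (rFam n))

lemma uFam_size : ∀ n : ℕ, 1 ≤ n → (uFam n).size ≤ 8 * n := by
  intro n h
  induction n with
  | zero => omega
  | succ k ih =>
    match k, ih with
    | 0, _ => simp [uFam, lamyxx, Term.size]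
    | k + 1, ih =>
      have := ih (by omega)
      simp only [uFam, lamyxx, Term.size] at *
      omega

/-- `|r_n| ≥ 2^n`, while `|u_n I|` is linear in `n`. -/
theorem rFam_size_exponential_uFamI_linear :
    (∀ n : ℕ, 2 ^ n ≤ (rFam n).size) ∧
    (∃ c d : ℕ, ∀ n : ℕ, 1 ≤ n → (Term.app (uFam n) (rFam 0)).size ≤ c * n + d) := by
  constructor
  · intro n
    induction n with
    | zero => simp [rFam, Term.size]
    | succ k ih =>
      simp only [rFam, Term.size, pow_succ] at *
      omega
  · refine ⟨8, 3, fun n h => ?_⟩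
    have := uFam_size n h
    simp only [Term.size, rFam]
    omega
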